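/- arXiv:2210.13389 — 3 statements merged into one kernel-verified Lean document; each statement's English description precedes it below -/
import Mathlib

section
/- Define J(μ,σ) = c·exp(−(μ−μ₀)²/(2s²)) + (μ−μ₀)·erf((μ−μ₀)/√(2s²)) − β·σ, where s² = σ₀² + σ²/P, c = √(2s²/π), σ₀ > 0, P ≥ 2, and β = √(2/(πP(P+1))). Then for fixed σ > 0, the partial derivative of J with respect to μ vanishes if and only if μ = μ₀. -/
open MeasureTheory

/-- The Gauss error function. -/
noncomputable def erf (x : ℝ) : ℝ :=
  (2 / Real.sqrt Real.pi) * ∫ t in (0:ℝ)..x, Real.exp (-t ^ 2)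

/-!
Writing `k = √(2s²)`, the `μ`-dependent part of `J` is `G(μ - μ₀)` with
`G x = k/√π · exp(-(x/k)²) + x · erf(x/k)`. Differentiating, the two Gaussian terms cancel and
`G' x = erf(x/k)`; since `erf` is strictly increasing with `erf 0 = 0`, this vanishes only at `x = 0`.
-/

open Real

lemma hasDerivAt_erf (x : ℝ) : HasDerivAt erf (2 / √π * exp (-x ^ 2)) x := by
  have hcont : Continuous fun t : ℝ => exp (-t ^ 2) := by fun_prop
  exact (intervalIntegral.integral_hasDerivAt_right (hcont.intervalIntegrable _ _)
    (hcont.stronglyMeasurableAtFilter _ _) hcont.continuousAt).const_mul _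

lemma erf_strictMono : StrictMono erf :=
  strictMono_of_deriv_pos fun x => by
    rw [(hasDerivAt_erf x).deriv]
    positivity

lemma erf_zero : erf 0 = 0 := by simp [erf]

lemma erf_eq_zero_iff {x : ℝ} : erf x = 0 ↔ x = 0 :=
  erf_strictMono.injective.eq_iff' erf_zero

lemma hasDerivAt_exp_add_mul_erf {k : ℝ} (hk : k ≠ 0) (x : ℝ) :
    HasDerivAt (fun y => k / √π * exp (-(y / k) ^ 2) + y * erf (y / k)) (erf (x / k)) x := by
  have hlin : HasDerivAt (fun y => y / k) (1 / k) x := (hasDerivAt_id x).div_const k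
  have hgauss := ((hlin.fun_pow 2).fun_neg.exp).const_mul (k / √π)
  have herf := (hasDerivAt_id x).fun_mul ((hasDerivAt_erf (x / k)).comp x hlin)
  refine (hgauss.add herf).congr_deriv ?_
  have : √π ≠ 0 := by positivity
  simp only [Function.comp, id, Nat.cast_ofNat, Nat.add_one_sub_one, pow_one]
  field_simp
  ring

theorem stmt5_general (μ₀ σ₀ : ℝ) (hσ₀ : 0 < σ₀) (P : ℕ) :
    ∀ σ > (0:ℝ), ∀ m : ℝ,
      deriv (fun m' : ℝ =>
          Real.sqrt (2 * (σ₀ ^ 2 + σ ^ 2 / P) / Real.pi)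
              * Real.exp (-(m' - μ₀) ^ 2 / (2 * (σ₀ ^ 2 + σ ^ 2 / P)))
            + (m' - μ₀) * erf ((m' - μ₀) / Real.sqrt (2 * (σ₀ ^ 2 + σ ^ 2 / P)))
            - Real.sqrt (2 / (Real.pi * P * (P + 1))) * σ) m = 0
        ↔ m = μ₀ := by
  intro σ _ m
  set s2 := σ₀ ^ 2 + σ ^ 2 / P
  set k := √(2 * s2)
  have hk : k ≠ 0 := (sqrt_pos.mpr (by positivity)).ne'
  have hc : √(2 * s2 / π) = k / √π := sqrt_div' _ pi_pos.le
  have hexp (y : ℝ) : -y ^ 2 / (2 * s2) = -(y / k) ^ 2 := by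
    rw [div_pow, sq_sqrt (by positivity), neg_div]
  simp only [hc, hexp]
  rw [(((hasDerivAt_exp_add_mul_erf hk (m - μ₀)).comp_sub_const m μ₀).sub_const _).deriv,
    erf_eq_zero_iff, div_eq_zero_iff, sub_eq_zero, or_iff_left hk]

/-- For `J(μ,σ) = c·exp(−(μ−μ₀)²/(2s²)) + (μ−μ₀)·erf((μ−μ₀)/√(2s²)) − β·σ`, with
`s² = σ₀² + σ²/P`, `c = √(2s²/π)`, `σ₀ > 0`, `P ≥ 2`, `β = √(2/(πP(P+1)))`:
for fixed `σ > 0`, `∂J/∂μ` vanishes iff `μ = μ₀`. -/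
theorem stmt5 (μ₀ σ₀ : ℝ) (hσ₀ : 0 < σ₀) (P : ℕ) (hP : 2 ≤ P) :
    ∀ σ > (0:ℝ), ∀ m : ℝ,
      deriv (fun m' : ℝ =>
          Real.sqrt (2 * (σ₀ ^ 2 + σ ^ 2 / P) / Real.pi)
              * Real.exp (-(m' - μ₀) ^ 2 / (2 * (σ₀ ^ 2 + σ ^ 2 / P)))
            + (m' - μ₀) * erf ((m' - μ₀) / Real.sqrt (2 * (σ₀ ^ 2 + σ ^ 2 / P)))
            - Real.sqrt (2 / (Real.pi * P * (P + 1))) * σ) m = 0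
        ↔ m = μ₀ :=
  stmt5_general μ₀ σ₀ hσ₀ P
end

section
/- Let J(σ) = √(2(σ₀² + σ²/P)/π) − β·σ with β = √(2/(πP(P+1))), σ₀ > 0, and integer P ≥ 2. Then J'(σ) = 0 on (0,∞) if and only if σ = σ₀. -/
open Real

lemma hasDerivAt_sqrt_add_mul_sq_sub_mul {a b c : ℝ} (x : ℝ) (h : 0 < a + c * x ^ 2) :
    HasDerivAt (fun y => √(a + c * y ^ 2) - b * y) (c * x / √(a + c * x ^ 2) - b) x := by
  have hq : HasDerivAt (fun y => a + c * y ^ 2) (c * (2 * x)) x := by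
    simpa using ((hasDerivAt_pow 2 x).const_mul c).const_add a
  refine ((hq.sqrt h.ne').sub ((hasDerivAt_id' x).const_mul b)).congr_deriv ?_
  field_simp

lemma deriv_sqrt_add_mul_sq_sub_mul_eq_zero_iff {a b c x : ℝ} (ha : 0 < a) (hb : 0 ≤ b)
    (hc : 0 ≤ c) (hx : 0 ≤ x) :
    deriv (fun y => √(a + c * y ^ 2) - b * y) x = 0 ↔ c ^ 2 * x ^ 2 = b ^ 2 * (a + c * x ^ 2) := by
  have hq : 0 < a + c * x ^ 2 := by positivity
  rw [(hasDerivAt_sqrt_add_mul_sq_sub_mul x hq).deriv, sub_eq_zero,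
    div_eq_iff (sqrt_pos.mpr hq).ne', ← pow_left_inj₀ (by positivity) (by positivity) two_ne_zero,
    mul_pow, mul_pow, sq_sqrt hq.le]

/-- For `J(σ) = √(2(σ₀² + σ²/P)/π) − β·σ` with `β = √(2/(πP(P+1)))`, `σ₀ > 0` and
integer `P ≥ 2`, the derivative `J'(σ)` vanishes on `(0,∞)` iff `σ = σ₀`. -/
theorem stmt6 (σ₀ : ℝ) (hσ₀ : 0 < σ₀) (P : ℕ) (hP : 2 ≤ P) :
    ∀ σ > (0:ℝ),
      deriv (fun σ' : ℝ =>
          Real.sqrt (2 * (σ₀ ^ 2 + σ' ^ 2 / P) / Real.pi)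
            - Real.sqrt (2 / (Real.pi * P * (P + 1))) * σ') σ = 0
        ↔ σ = σ₀ := by
  intro σ hσ
  have hP₀ : (0 : ℝ) < P := by exact_mod_cast (by omega : 0 < P)
  have hJ : (fun σ' : ℝ => √(2 * (σ₀ ^ 2 + σ' ^ 2 / P) / π) - √(2 / (π * P * (P + 1))) * σ') =
      fun σ' => √(2 * σ₀ ^ 2 / π + 2 / (π * P) * σ' ^ 2) - √(2 / (π * P * (P + 1))) * σ' := by
    funext σ'
    ring_nf
  rw [hJ, deriv_sqrt_add_mul_sq_sub_mul_eq_zero_iff (by positivity) (sqrt_nonneg _)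
    (by positivity) hσ.le, sq_sqrt (by positivity), ← pow_left_inj₀ hσ.le hσ₀.le two_ne_zero]
  -- `2/(πP) − β² = 2/(π(P+1))`, so clearing denominators leaves `σ²(P+1) = Pσ₀² + σ²`.
  field_simp [pi_pos.ne']
  constructor
  · intro h
    exact mul_left_cancel₀ hP₀.ne' (by linarith)
  · intro h
    rw [h]
    ring
end

section
/- For symmetric positive semidefinite matrices Σ₁, Σ₂ ∈ ℝ^{d×d}, the quantity tr[Σ₁ + Σ₂ − 2(Σ₁^{1/2} Σ₂ Σ₁^{1/2})^{1/2}] is nonnegative, and it equals zero when Σ₁ = Σ₂. -/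
/-!
Write `A = S₁^{1/2}`, `B = S₂^{1/2}` and `T = (A S₂ A)^{1/2}`, so `T² = (BA)ᵀ(BA)`. If `v i` is an
orthonormal eigenbasis of `T` with eigenvalues `μ i`, the vectors `BA v i` are orthogonal with
norms `μ i`, so the `u i = μ i⁻¹ • BA v i` with `μ i ≠ 0` are orthonormal and
`μ i = ⟪A v i, B u i⟫ ≤ (‖A v i‖² + ‖B u i‖²) / 2`. Summing and applying Bessel's inequality
to both orthonormal families gives `2 tr T ≤ tr A² + tr B² = tr S₁ + tr S₂`. When `S₁ = S₂`,
`A S₂ A = S₁²`, so `T = S₁` and the trace vanishes.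
-/

namespace Matrix.PosSemidef

open scoped ComplexOrder

/-- The positive semidefinite square root of a positive semidefinite matrix
(restored: removed from Mathlib; definition as in Mathlib of December 2024). -/
noncomputable def sqrt {n 𝕜 : Type*} [Fintype n] [RCLike 𝕜] [DecidableEq n]
    {A : Matrix n n 𝕜} (hA : A.PosSemidef) : Matrix n n 𝕜 :=
  hA.1.eigenvectorUnitary.1 * Matrix.diagonal ((↑) ∘ (Real.sqrt ∘ hA.1.eigenvalues)) *
    (star hA.1.eigenvectorUnitary : Matrix n n 𝕜)

end Matrix.PosSemidef

namespace Matrix.PosSemidef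

open scoped ComplexOrder MatrixOrder

variable {n 𝕜 : Type*} [Fintype n] [RCLike 𝕜] [DecidableEq n] {A : Matrix n n 𝕜}

lemma sqrt_eq_cfcSqrt (hA : A.PosSemidef) : hA.sqrt = CFC.sqrt A := by
  rw [CFC.sqrt_eq_cfc, cfc_nnreal_eq_real _ A, hA.1.cfc_eq]
  simp only [IsHermitian.cfc, sqrt, Unitary.conjStarAlgAut_apply]
  congr 3
  funext i
  simp [Real.coe_sqrt, Real.coe_toNNReal', max_eq_left (hA.eigenvalues_nonneg i)]

lemma posSemidef_sqrt (hA : A.PosSemidef) : hA.sqrt.PosSemidef := by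
  rw [sqrt_eq_cfcSqrt]
  exact nonneg_iff_posSemidef.mp (CFC.sqrt_nonneg A)

lemma sqrt_mul_self (hA : A.PosSemidef) : hA.sqrt * hA.sqrt = A := by
  rw [sqrt_eq_cfcSqrt]
  exact CFC.sqrt_mul_sqrt_self A hA.nonneg

lemma eq_sqrt_of_sq_eq (hA : A.PosSemidef) {B : Matrix n n 𝕜} (hB : B.PosSemidef)
    (hAB : A ^ 2 = B) : A = hB.sqrt := by
  rw [sqrt_eq_cfcSqrt, ← hAB, CFC.sqrt_sq A hA.nonneg]

end Matrix.PosSemidef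

open LinearMap
open scoped RealInnerProductSpace

variable {E : Type*} [NormedAddCommGroup E] [InnerProductSpace ℝ E]

lemma LinearMap.IsSymmetric.sum_norm_sq_apply_eq_trace {A : E →ₗ[ℝ] E} (hA : A.IsSymmetric)
    {ι : Type*} [Fintype ι] (b : OrthonormalBasis ι ℝ E) :
    ∑ i, ‖A (b i)‖ ^ 2 = trace ℝ E (A * A) := by
  rw [trace_eq_sum_inner _ b]
  refine Fintype.sum_congr _ _ fun i => ?_
  rw [Module.End.mul_apply, ← hA, real_inner_self_eq_norm_sq]

lemma Orthonormal.sum_norm_sq_apply_le_trace [FiniteDimensional ℝ E] {ι : Type*} [Fintype ι]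
    {u : ι → E} (hu : Orthonormal ℝ u) {A : E →ₗ[ℝ] E} (hA : A.IsSymmetric) :
    ∑ i, ‖A (u i)‖ ^ 2 ≤ trace ℝ E (A * A) := by
  let e := stdOrthonormalBasis ℝ E
  calc ∑ i, ‖A (u i)‖ ^ 2 = ∑ k, ∑ i, ‖⟪u i, A (e k)⟫‖ ^ 2 := by
        rw [Finset.sum_comm]
        refine Fintype.sum_congr _ _ fun i => ?_
        rw [← e.sum_sq_norm_inner_right]
        exact Fintype.sum_congr _ _ fun k => by rw [← hA, real_inner_comm]
    _ ≤ ∑ k, ‖A (e k)‖ ^ 2 := Finset.sum_le_sum fun k _ => hu.sum_inner_products_le _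
    _ = trace ℝ E (A * A) := hA.sum_norm_sq_apply_eq_trace e

theorem LinearMap.IsPositive.two_mul_trace_le [FiniteDimensional ℝ E] {T A B : E →ₗ[ℝ] E}
    (hT : T.IsPositive) (hA : A.IsSymmetric) (hB : B.IsSymmetric)
    (hTAB : T * T = A * B * B * A) :
    2 * trace ℝ E T ≤ trace ℝ E (A * A) + trace ℝ E (B * B) := by
  set v := hT.isSymmetric.eigenvectorBasis rfl
  set μ := hT.isSymmetric.eigenvalues rfl
  have hTv : ∀ i, T (v i) = μ i • v i := hT.isSymmetric.apply_eigenvectorBasis rfl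
  have hBA : ∀ x y, ⟪B (A x), B (A y)⟫ = ⟪T x, T y⟫ := fun x y => by
    rw [hB, hA, hT.isSymmetric, ← Module.End.mul_apply T, hTAB]
    rfl
  let ι := {i // μ i ≠ 0}
  let u : ι → E := fun i => (μ i)⁻¹ • B (A (v i))
  have hv : Orthonormal ℝ fun i : ι => v i := v.orthonormal.comp _ Subtype.val_injective
  have hu : Orthonormal ℝ u := by
    rw [orthonormal_iff_ite] at hv ⊢
    intro i j
    rw [← hv, real_inner_smul_left, real_inner_smul_right, hBA, hTv, hTv,
      real_inner_smul_left, real_inner_smul_right]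
    field_simp [i.2, j.2]
  have hμ : ∀ i : ι, 2 * μ i ≤ ‖A (v i)‖ ^ 2 + ‖B (u i)‖ ^ 2 := fun i => by
    have : μ i = ⟪A (v i), B (u i)⟫ := by
      rw [map_smul, real_inner_smul_right, ← hB, hBA, hTv, real_inner_smul_left,
        real_inner_smul_right, real_inner_self_eq_norm_sq, v.norm_eq_one]
      field_simp [i.2]
    linarith [real_inner_le_norm (A (v i)) (B (u i)), two_mul_le_add_sq ‖A (v i)‖ ‖B (u i)‖]
  calc 2 * trace ℝ E T = 2 * ∑ i : ι, μ i := by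
        rw [hT.isSymmetric.trace_eq_sum_eigenvalues rfl, RCLike.ofReal_real_eq_id, id_eq,
          ← Finset.sum_filter_ne_zero, Finset.sum_subtype (p := fun i => μ i ≠ 0) _
            fun i => by simp [μ]]
    _ ≤ ∑ i : ι, ‖A (v i)‖ ^ 2 + ∑ i : ι, ‖B (u i)‖ ^ 2 := by
        rw [Finset.mul_sum, ← Finset.sum_add_distrib]
        exact Finset.sum_le_sum fun i _ => hμ i
    _ ≤ trace ℝ E (A * A) + trace ℝ E (B * B) :=
        add_le_add (hv.sum_norm_sq_apply_le_trace hA) (hu.sum_norm_sq_apply_le_trace hB)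

namespace Matrix

variable {n 𝕜 : Type*} [Fintype n] [DecidableEq n] [RCLike 𝕜]

lemma trace_toEuclideanLin (M : Matrix n n 𝕜) :
    LinearMap.trace 𝕜 _ (toEuclideanLin M) = M.trace := by
  rw [toEuclideanLin_eq_toLin_orthonormal,
    trace_eq_matrix_trace 𝕜 (EuclideanSpace.basisFun n 𝕜).toBasis, LinearMap.toMatrix_toLin]

lemma toEuclideanLin_mul (M N : Matrix n n 𝕜) :
    toEuclideanLin (M * N) = toEuclideanLin M * toEuclideanLin N := by
  simp [Module.End.mul_eq_comp]

theorem PosSemidef.two_mul_trace_le {T A B : Matrix n n ℝ} (hT : T.PosSemidef)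
    (hA : A.IsHermitian) (hB : B.IsHermitian) (hTAB : T * T = A * B * B * A) :
    2 * T.trace ≤ (A * A).trace + (B * B).trace := by
  simpa only [← toEuclideanLin_mul, trace_toEuclideanLin] using
    (isPositive_toEuclideanLin_iff.mpr hT).two_mul_trace_le
      (isSymmetric_toEuclideanLin_iff.mpr hA) (isSymmetric_toEuclideanLin_iff.mpr hB)
      (by simpa only [toEuclideanLin_mul] using congrArg toEuclideanLin hTAB)

end Matrix

/-- For real symmetric positive semidefinite `S₁, S₂`, the quantity
`tr[S₁ + S₂ − 2(S₁^{1/2} S₂ S₁^{1/2})^{1/2}]` is nonnegative, and equals zero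
when `S₁ = S₂`. -/
theorem stmt17 {d : ℕ} (S₁ S₂ : Matrix (Fin d) (Fin d) ℝ)
    (h₁ : S₁.PosSemidef) (h₂ : S₂.PosSemidef)
    (hmid : (h₁.sqrt * S₂ * h₁.sqrt).PosSemidef) :
    0 ≤ (S₁ + S₂ - 2 • hmid.sqrt).trace
      ∧ (S₁ = S₂ → (S₁ + S₂ - 2 • hmid.sqrt).trace = 0) := by
  refine ⟨?_, fun hS => ?_⟩
  · have hTAB : hmid.sqrt * hmid.sqrt = h₁.sqrt * h₂.sqrt * h₂.sqrt * h₁.sqrt := by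
      rw [hmid.sqrt_mul_self, mul_assoc h₁.sqrt h₂.sqrt, h₂.sqrt_mul_self]
    have := hmid.posSemidef_sqrt.two_mul_trace_le h₁.posSemidef_sqrt.1 h₂.posSemidef_sqrt.1 hTAB
    rw [h₁.sqrt_mul_self, h₂.sqrt_mul_self] at this
    rw [Matrix.trace_sub, Matrix.trace_add, Matrix.trace_smul, nsmul_eq_mul, Nat.cast_ofNat]
    linarith
  · subst hS
    have hsq : S₁ ^ 2 = h₁.sqrt * S₁ * h₁.sqrt := by
      calc S₁ ^ 2 = h₁.sqrt * h₁.sqrt * (h₁.sqrt * h₁.sqrt) := by rw [h₁.sqrt_mul_self, sq]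
        _ = h₁.sqrt * (h₁.sqrt * h₁.sqrt) * h₁.sqrt := by simp only [mul_assoc]
        _ = h₁.sqrt * S₁ * h₁.sqrt := by rw [h₁.sqrt_mul_self]
    rw [← h₁.eq_sqrt_of_sq_eq hmid hsq, two_nsmul, sub_self, Matrix.trace_zero]
end
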